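/- arXiv:2310.11762 — 3 statements merged into one kernel-verified Lean document; each statement's English description precedes it below -/
import Mathlib

section
/- Suppose w e > 0 for all e ∈ E. Then for all μ, γ ∈ Range(S), W₁(μ, γ) ≥ 0, and W₁(μ, γ) = 0 if and only if μ = γ. -/
/-- The graph 1-Wasserstein distance: minimum cost of a flow `f` on edges with
`S.mulVec f = γ - μ`, where the cost is `∑ e, w e * |f e|`. -/
noncomputable def graphW1 {V E : Type*} [Fintype E] (S : Matrix V E ℝ) (w : E → ℝ)
    (μ γ : V → ℝ) : ℝ :=
  sInf {r : ℝ | ∃ f : E → ℝ, S.mulVec f = γ - μ ∧ r = ∑ e, w e * |f e|}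

/-- Positivity: with strictly positive edge weights, `W₁(μ,γ) ≥ 0` on `Range(S)`,
with equality iff `μ = γ`. -/
theorem graphW1_nonneg_and_eq_zero_iff {V E : Type*} [Fintype V] [Fintype E]
    (S : Matrix V E ℝ) (w : E → ℝ) (hw : ∀ e, 0 < w e)
    (μ γ : V → ℝ) (hμ : μ ∈ Set.range S.mulVec) (hγ : γ ∈ Set.range S.mulVec) :
    0 ≤ graphW1 S w μ γ ∧ (graphW1 S w μ γ = 0 ↔ μ = γ) := by
  obtain ⟨g, hg⟩ := hγ
  obtain ⟨m, hm⟩ := hμ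
  set A := {r : ℝ | ∃ f : E → ℝ, S.mulVec f = γ - μ ∧ r = ∑ e, w e * |f e|} with hA
  have hne : A.Nonempty := by
    refine ⟨∑ e, w e * |(g - m) e|, g - m, ?_, rfl⟩
    rw [Matrix.mulVec_sub, hg, hm]
  have hbdd : ∀ r ∈ A, 0 ≤ r := by
    rintro r ⟨f, _, rfl⟩
    exact Finset.sum_nonneg fun e _ => mul_nonneg (hw e).le (abs_nonneg _)
  have hnn : 0 ≤ graphW1 S w μ γ := le_csInf hne hbdd
  refine ⟨hnn, ?_, ?_⟩
  · -- graphW1 = 0 → μ = γ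
    intro h0
    by_contra hne'
    have hd : γ - μ ≠ 0 := sub_ne_zero.mpr (Ne.symm hne')
    obtain ⟨v, hv⟩ : ∃ v, (γ - μ) v ≠ 0 := by
      by_contra h
      push_neg at h
      exact hd (funext h)
    -- constants
    set M : ℝ := (∑ e, |S v e|) + 1 with hM
    have hMpos : 0 < M := by
      have : 0 ≤ ∑ e, |S v e| := Finset.sum_nonneg fun e _ => abs_nonneg _
      linarith
    by_cases hE : Nonempty E
    · set wmin : ℝ := Finset.univ.inf' (Finset.univ_nonempty) w with hwmin
      have hwminpos : 0 < wmin := by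
        obtain ⟨e, _, he⟩ := Finset.exists_mem_eq_inf' (Finset.univ_nonempty) w
        rw [hwmin, he]; exact hw e
      have hlb : ∀ r ∈ A, wmin * |(γ - μ) v| / M ≤ r := by
        rintro r ⟨f, hf, rfl⟩
        have h1 : |(γ - μ) v| ≤ M * ∑ e, |f e| := by
          have : (γ - μ) v = ∑ e, S v e * f e := by rw [← hf]; rfl
          rw [this]
          calc |∑ e, S v e * f e| ≤ ∑ e, |S v e * f e| := Finset.abs_sum_le_sum_abs _ _
            _ = ∑ e, |S v e| * |f e| := by simp [abs_mul]
            _ ≤ ∑ e, M * |f e| := by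
                refine Finset.sum_le_sum fun e _ => ?_
                refine mul_le_mul_of_nonneg_right ?_ (abs_nonneg _)
                calc |S v e| ≤ ∑ e', |S v e'| :=
                      Finset.single_le_sum (f := fun e' => |S v e'|) (fun e' _ => abs_nonneg _) (Finset.mem_univ e)
                  _ ≤ M := by rw [hM]; linarith
            _ = M * ∑ e, |f e| := by rw [Finset.mul_sum]
        have h2 : wmin * ∑ e, |f e| ≤ ∑ e, w e * |f e| := by
          rw [Finset.mul_sum]
          refine Finset.sum_le_sum fun e _ => ?_
          exact mul_le_mul_of_nonneg_right (Finset.inf'_le w (Finset.mem_univ e)) (abs_nonneg _)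
        rw [div_le_iff₀ hMpos]
        calc wmin * |(γ - μ) v| ≤ wmin * (M * ∑ e, |f e|) :=
              mul_le_mul_of_nonneg_left h1 hwminpos.le
          _ = (wmin * ∑ e, |f e|) * M := by ring
          _ ≤ (∑ e, w e * |f e|) * M := mul_le_mul_of_nonneg_right h2 hMpos.le
      have : wmin * |(γ - μ) v| / M ≤ graphW1 S w μ γ := le_csInf hne hlb
      have hpos : 0 < wmin * |(γ - μ) v| / M :=
        div_pos (mul_pos hwminpos (abs_pos.mpr hv)) hMpos
      rw [h0] at this; linarith
    · -- E empty: then S.mulVec f = 0 always, so γ - μ = 0, contradiction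
      obtain ⟨r, f, hf, _⟩ := hne
      apply hd
      rw [← hf]
      funext u
      simp [Matrix.mulVec, dotProduct, Finset.univ_eq_empty_iff.mpr (not_nonempty_iff.mp hE)]
  · -- μ = γ → graphW1 = 0
    intro h
    have h0 : (0:ℝ) ∈ A := by
      refine ⟨0, ?_, by simp⟩
      simp [h, Matrix.mulVec_zero]
    have hle : graphW1 S w μ γ ≤ 0 := csInf_le ⟨0, hbdd⟩ h0
    linarith
end

section
/- (Theorem 1, partial version.) Suppose w e > 0 for all e ∈ E. Then for every subset V_L ⊆ V, the partial distance W₁ᴾ is a metric on Range(S_{V_L}): for all μ, γ, ζ ∈ Range(S_{V_L}), (i) W₁ᴾ(μ, γ) ≥ 0; (ii) W₁ᴾ(μ, γ) = 0 if and only if μ = γ; (iii) W₁ᴾ(μ, γ) = W₁ᴾ(γ, μ); (iv) W₁ᴾ(μ, ζ) ≤ W₁ᴾ(μ, γ) + W₁ᴾ(γ, ζ). -/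
section Aux
variable {V E : Type*} [Fintype E] (A : Matrix V E ℝ) (w : E → ℝ)

lemma gw1_cost_nonneg (hw : ∀ e, 0 < w e) (f : E → ℝ) : 0 ≤ ∑ e, w e * |f e| :=
  Finset.sum_nonneg fun e _ => mul_nonneg (hw e).le (abs_nonneg _)

lemma gw1_bdd (hw : ∀ e, 0 < w e) (μ γ : V → ℝ) :
    BddBelow {r : ℝ | ∃ f : E → ℝ, A.mulVec f = γ - μ ∧ r = ∑ e, w e * |f e|} :=
  ⟨0, by rintro r ⟨f, _, rfl⟩; exact gw1_cost_nonneg w hw f⟩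

lemma gw1_nonempty {μ γ : V → ℝ}
    (hμ : μ ∈ Set.range A.mulVec) (hγ : γ ∈ Set.range A.mulVec) :
    {r : ℝ | ∃ f : E → ℝ, A.mulVec f = γ - μ ∧ r = ∑ e, w e * |f e|}.Nonempty := by
  obtain ⟨m, hm⟩ := hμ
  obtain ⟨g, hg⟩ := hγ
  exact ⟨∑ e, w e * |(g - m) e|, g - m, by rw [Matrix.mulVec_sub, hm, hg], rfl⟩

lemma gw1_nonneg (hw : ∀ e, 0 < w e) (μ γ : V → ℝ) : 0 ≤ graphW1 A w μ γ :=
  Real.sInf_nonneg (by rintro r ⟨f, _, rfl⟩; exact gw1_cost_nonneg w hw f)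

lemma gw1_symm (μ γ : V → ℝ) : graphW1 A w μ γ = graphW1 A w γ μ := by
  unfold graphW1
  congr 1
  ext r
  constructor
  · rintro ⟨f, hf, rfl⟩
    exact ⟨-f, by rw [Matrix.mulVec_neg, hf, neg_sub], by simp [abs_neg]⟩
  · rintro ⟨f, hf, rfl⟩
    exact ⟨-f, by rw [Matrix.mulVec_neg, hf, neg_sub], by simp [abs_neg]⟩

lemma gw1_eq_zero_iff (hw : ∀ e, 0 < w e) {μ γ : V → ℝ}
    (hμ : μ ∈ Set.range A.mulVec) (hγ : γ ∈ Set.range A.mulVec) :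
    graphW1 A w μ γ = 0 ↔ μ = γ := by
  constructor
  · intro h0
    have hzero : ∀ v, (γ - μ) v = 0 := by
      intro v
      by_contra hv
      set C : ℝ := ∑ e, |A v e| / w e with hC
      have hCpos : 0 < C + 1 := by
        have : 0 ≤ C := Finset.sum_nonneg fun e _ => div_nonneg (abs_nonneg _) (hw e).le
        linarith
      set ε : ℝ := |(γ - μ) v| / (2 * (C + 1)) with hε
      have hεpos : 0 < ε := by
        apply div_pos (abs_pos.mpr hv); linarith
      have hlt : sInf {r : ℝ | ∃ f : E → ℝ, A.mulVec f = γ - μ ∧ r = ∑ e, w e * |f e|} < ε := by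
        rw [graphW1] at h0; rw [h0]; exact hεpos
      obtain ⟨r, ⟨f, hf, rfl⟩, hrlt⟩ :=
        exists_lt_of_csInf_lt (gw1_nonempty A w hμ hγ) hlt
      have hfe : ∀ e, |f e| ≤ (∑ e, w e * |f e|) / w e := by
        intro e
        rw [le_div_iff₀ (hw e)]
        calc |f e| * w e = w e * |f e| := mul_comm _ _
          _ ≤ ∑ e, w e * |f e| :=
            Finset.single_le_sum (fun e _ => mul_nonneg (hw e).le (abs_nonneg _))
              (Finset.mem_univ e)
      have hbv : |(γ - μ) v| ≤ (∑ e, w e * |f e|) * C := by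
        have : (γ - μ) v = ∑ e, A v e * f e := by rw [← hf]; rfl
        rw [this]
        calc |∑ e, A v e * f e| ≤ ∑ e, |A v e * f e| := Finset.abs_sum_le_sum_abs _ _
          _ ≤ ∑ e, |A v e| * ((∑ e, w e * |f e|) / w e) := by
              apply Finset.sum_le_sum
              intro e _
              rw [abs_mul]
              exact mul_le_mul_of_nonneg_left (hfe e) (abs_nonneg _)
          _ = (∑ e, w e * |f e|) * C := by
              rw [hC, Finset.mul_sum]
              apply Finset.sum_congr rfl
              intro e _
              field_simp
      have hrnn : 0 ≤ ∑ e, w e * |f e| := gw1_cost_nonneg w hw f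
      have hCle : C ≤ C + 1 := by linarith
      have : |(γ - μ) v| ≤ ε * (C + 1) := by
        calc |(γ - μ) v| ≤ (∑ e, w e * |f e|) * C := hbv
          _ ≤ ε * (C + 1) := by
              exact mul_le_mul hrlt.le hCle
                (Finset.sum_nonneg fun e _ => div_nonneg (abs_nonneg _) (hw e).le) hεpos.le
      rw [hε] at this
      have h2 : |(γ - μ) v| / (2 * (C + 1)) * (C + 1) = |(γ - μ) v| / 2 := by
        field_simp
      rw [h2] at this
      have := abs_pos.mpr hv
      linarith
    funext v
    have := hzero v
    simp only [Pi.sub_apply] at this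
    linarith
  · rintro rfl
    apply le_antisymm
    · apply csInf_le (gw1_bdd A w hw μ μ)
      exact ⟨0, by simp [Matrix.mulVec_zero], by simp⟩
    · exact gw1_nonneg A w hw μ μ

lemma gw1_triangle (hw : ∀ e, 0 < w e) {μ γ ζ : V → ℝ}
    (hμ : μ ∈ Set.range A.mulVec) (hγ : γ ∈ Set.range A.mulVec)
    (hζ : ζ ∈ Set.range A.mulVec) :
    graphW1 A w μ ζ ≤ graphW1 A w μ γ + graphW1 A w γ ζ := by
  have key : ∀ r₁ ∈ {r : ℝ | ∃ f : E → ℝ, A.mulVec f = γ - μ ∧ r = ∑ e, w e * |f e|},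
      ∀ r₂ ∈ {r : ℝ | ∃ f : E → ℝ, A.mulVec f = ζ - γ ∧ r = ∑ e, w e * |f e|},
      graphW1 A w μ ζ ≤ r₁ + r₂ := by
    rintro r₁ ⟨f₁, hf₁, rfl⟩ r₂ ⟨f₂, hf₂, rfl⟩
    calc graphW1 A w μ ζ ≤ ∑ e, w e * |(f₁ + f₂) e| := by
          apply csInf_le (gw1_bdd A w hw μ ζ)
          exact ⟨f₁ + f₂, by rw [Matrix.mulVec_add, hf₁, hf₂]; abel, rfl⟩
      _ ≤ (∑ e, w e * |f₁ e|) + ∑ e, w e * |f₂ e| := by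
          rw [← Finset.sum_add_distrib]
          apply Finset.sum_le_sum
          intro e _
          rw [← mul_add]
          exact mul_le_mul_of_nonneg_left (abs_add_le _ _) (hw e).le
  have h1 : graphW1 A w μ ζ - graphW1 A w γ ζ ≤ graphW1 A w μ γ := by
    apply le_csInf (gw1_nonempty A w hμ hγ)
    intro r₁ hr₁
    have h2 : graphW1 A w μ ζ - r₁ ≤ graphW1 A w γ ζ := by
      apply le_csInf (gw1_nonempty A w hγ hζ)
      intro r₂ hr₂
      linarith [key r₁ hr₁ r₂ hr₂]
    linarith
  linarith

end Aux

/-- Theorem 1 (partial version): with strictly positive edge weights, for every subset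
`V_L ⊆ V` the partial distance `W₁ᴾ` is a metric on `Range(S_{V_L})`. -/
theorem graphW1_partial_metric {V E : Type*} [Fintype V] [Fintype E]
    (S : Matrix V E ℝ) (w : E → ℝ) (hw : ∀ e, 0 < w e) (VL : Set V)
    (μ γ ζ : VL → ℝ)
    (hμ : μ ∈ Set.range (S.submatrix (Subtype.val : VL → V) id).mulVec)
    (hγ : γ ∈ Set.range (S.submatrix (Subtype.val : VL → V) id).mulVec)
    (hζ : ζ ∈ Set.range (S.submatrix (Subtype.val : VL → V) id).mulVec) :
    0 ≤ graphW1 (S.submatrix (Subtype.val : VL → V) id) w μ γ ∧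
    (graphW1 (S.submatrix (Subtype.val : VL → V) id) w μ γ = 0 ↔ μ = γ) ∧
    graphW1 (S.submatrix (Subtype.val : VL → V) id) w μ γ =
      graphW1 (S.submatrix (Subtype.val : VL → V) id) w γ μ ∧
    graphW1 (S.submatrix (Subtype.val : VL → V) id) w μ ζ ≤
      graphW1 (S.submatrix (Subtype.val : VL → V) id) w μ γ +
        graphW1 (S.submatrix (Subtype.val : VL → V) id) w γ ζ := by
  exact ⟨gw1_nonneg _ w hw μ γ, gw1_eq_zero_iff _ w hw hμ hγ, gw1_symm _ w μ γ,
    gw1_triangle _ w hw hμ hγ hζ⟩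
end

section
/- (QW loss is a metric.) Suppose w e > 0 for all e ∈ E. Then QW is a metric on the set of matrices Y : V_L → C → ℝ all of whose columns lie in Range(S_{V_L}): for all such matrices X, Y, Z, (i) QW(X, Y) ≥ 0; (ii) QW(X, Y) = 0 if and only if X = Y; (iii) QW(X, Y) = QW(Y, X); (iv) QW(X, Z) ≤ QW(X, Y) + QW(Y, Z). -/
/-- The Quasi-Wasserstein loss: the sum over label dimensions of the partial
1-Wasserstein distances between the corresponding columns. -/
noncomputable def QWLoss {VL E C : Type*} [Fintype E] [Fintype C]
    (S : Matrix VL E ℝ) (w : E → ℝ) (Yhat Y : VL → C → ℝ) : ℝ :=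
  ∑ c, graphW1 S w (fun v => Yhat v c) (fun v => Y v c)

section Aux

variable {V E : Type*} [Fintype E] (S : Matrix V E ℝ) (w : E → ℝ)

lemma gw1_set_nonneg (hw : ∀ e, 0 < w e) (μ γ : V → ℝ) :
    ∀ r ∈ {r : ℝ | ∃ f : E → ℝ, S.mulVec f = γ - μ ∧ r = ∑ e, w e * |f e|}, 0 ≤ r := by
  rintro r ⟨f, hf, rfl⟩
  exact Finset.sum_nonneg fun e _ => mul_nonneg (hw e).le (abs_nonneg _)

lemma gw1_bddBelow (hw : ∀ e, 0 < w e) (μ γ : V → ℝ) :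
    BddBelow {r : ℝ | ∃ f : E → ℝ, S.mulVec f = γ - μ ∧ r = ∑ e, w e * |f e|} :=
  ⟨0, fun r hr => gw1_set_nonneg S w hw μ γ r hr⟩

lemma gw1_set_nonempty (μ γ : V → ℝ) (h : γ - μ ∈ Set.range S.mulVec) :
    {r : ℝ | ∃ f : E → ℝ, S.mulVec f = γ - μ ∧ r = ∑ e, w e * |f e|}.Nonempty := by
  obtain ⟨f, hf⟩ := h
  exact ⟨∑ e, w e * |f e|, f, hf, rfl⟩

lemma graphW1_nonneg (hw : ∀ e, 0 < w e) (μ γ : V → ℝ) : 0 ≤ graphW1 S w μ γ :=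
  Real.sInf_nonneg (gw1_set_nonneg S w hw μ γ)

lemma graphW1_self (hw : ∀ e, 0 < w e) (μ : V → ℝ) : graphW1 S w μ μ = 0 := by
  refine le_antisymm ?_ (graphW1_nonneg S w hw μ μ)
  refine csInf_le (gw1_bddBelow S w hw μ μ) ⟨0, ?_, ?_⟩
  · simp [Matrix.mulVec_zero]
  · simp

lemma graphW1_symm (μ γ : V → ℝ) : graphW1 S w μ γ = graphW1 S w γ μ := by
  unfold graphW1
  congr 1
  ext r
  constructor
  · rintro ⟨f, hf, rfl⟩
    exact ⟨-f, by simp [Matrix.mulVec_neg, hf], by simp⟩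
  · rintro ⟨f, hf, rfl⟩
    exact ⟨-f, by simp [Matrix.mulVec_neg, hf], by simp⟩

lemma graphW1_eq_zero_iff (hw : ∀ e, 0 < w e) (μ γ : V → ℝ)
    (h : γ - μ ∈ Set.range S.mulVec) : graphW1 S w μ γ = 0 ↔ μ = γ := by
  constructor
  · intro h0
    by_contra hne
    have hd : γ - μ ≠ 0 := fun hc => hne (by funext v; have := congrFun hc v; simp at this; linarith)
    obtain ⟨v, hv⟩ : ∃ v, (γ - μ) v ≠ 0 := by
      by_contra hc
      push_neg at hc
      exact hd (funext hc)
    set K : ℝ := ∑ e, |S v e| / w e with hK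
    have hK0 : 0 ≤ K := Finset.sum_nonneg fun e _ => div_nonneg (abs_nonneg _) (hw e).le
    -- Every feasible cost r satisfies |(γ-μ) v| ≤ K * r
    have key : ∀ r ∈ {r : ℝ | ∃ f : E → ℝ, S.mulVec f = γ - μ ∧ r = ∑ e, w e * |f e|},
        |(γ - μ) v| ≤ K * r := by
      rintro r ⟨f, hf, rfl⟩
      have h1 : |(γ - μ) v| ≤ ∑ e, |S v e| * |f e| := by
        rw [← hf]
        calc |S.mulVec f v| = |∑ e, S v e * f e| := rfl
          _ ≤ ∑ e, |S v e * f e| := Finset.abs_sum_le_sum_abs _ _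
          _ = ∑ e, |S v e| * |f e| := by simp [abs_mul]
      have h2 : ∑ e, |S v e| * |f e| ≤ K * ∑ e, w e * |f e| := by
        rw [hK, Finset.sum_mul]
        refine Finset.sum_le_sum fun e _ => ?_
        have hb : w e * |f e| ≤ ∑ e', w e' * |f e'| :=
          Finset.single_le_sum (fun e' _ => mul_nonneg (hw e').le (abs_nonneg _))
            (Finset.mem_univ e)
        have : |S v e| * |f e| = (|S v e| / w e) * (w e * |f e|) := by
          rw [div_mul_eq_mul_div, mul_comm (w e), mul_div_assoc, mul_div_assoc,
            div_self (ne_of_gt (hw e)), mul_one]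
        rw [this]
        exact mul_le_mul_of_nonneg_left hb (div_nonneg (abs_nonneg _) (hw e).le)
      linarith
    have hKpos : 0 < K := by
      rcases hK0.lt_or_eq with h' | h'
      · exact h'
      · exfalso
        have hall : ∀ e, S v e = 0 := by
          intro e
          have := (Finset.sum_eq_zero_iff_of_nonneg
            (fun e _ => div_nonneg (abs_nonneg _) (hw e).le)).mp h'.symm e (Finset.mem_univ e)
          have := (div_eq_zero_iff.mp this).resolve_right (ne_of_gt (hw e))
          exact abs_eq_zero.mp this
        obtain ⟨f, hf⟩ := h
        have : (γ - μ) v = 0 := by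
          rw [← hf]
          simp [Matrix.mulVec, dotProduct, hall]
        exact hv this
    have hlb : |(γ - μ) v| / K ≤ graphW1 S w μ γ := by
      refine le_csInf (gw1_set_nonempty S w μ γ h) fun r hr => ?_
      rw [div_le_iff₀ hKpos]
      have := key r hr
      linarith [this]
    rw [h0] at hlb
    have : 0 < |(γ - μ) v| / K := div_pos (abs_pos.mpr hv) hKpos
    linarith
  · rintro rfl
    exact graphW1_self S w hw μ

lemma graphW1_triangle (hw : ∀ e, 0 < w e) (μ γ ρ : V → ℝ)
    (h1 : γ - μ ∈ Set.range S.mulVec) (h2 : ρ - γ ∈ Set.range S.mulVec) :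
    graphW1 S w μ ρ ≤ graphW1 S w μ γ + graphW1 S w γ ρ := by
  have key : ∀ a ∈ {r : ℝ | ∃ f : E → ℝ, S.mulVec f = γ - μ ∧ r = ∑ e, w e * |f e|},
      ∀ b ∈ {r : ℝ | ∃ f : E → ℝ, S.mulVec f = ρ - γ ∧ r = ∑ e, w e * |f e|},
      graphW1 S w μ ρ ≤ a + b := by
    rintro a ⟨f, hf, rfl⟩ b ⟨g, hg, rfl⟩
    have hfeas : S.mulVec (f + g) = ρ - μ := by
      rw [Matrix.mulVec_add, hf, hg]; abel
    calc graphW1 S w μ ρ ≤ ∑ e, w e * |(f + g) e| :=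
          csInf_le (gw1_bddBelow S w hw μ ρ) ⟨f + g, hfeas, rfl⟩
      _ ≤ (∑ e, w e * |f e|) + ∑ e, w e * |g e| := by
          rw [← Finset.sum_add_distrib]
          refine Finset.sum_le_sum fun e _ => ?_
          rw [← mul_add]
          exact mul_le_mul_of_nonneg_left (abs_add_le _ _) (hw e).le
  have step1 : graphW1 S w μ ρ - graphW1 S w γ ρ ≤ graphW1 S w μ γ := by
    refine le_csInf (gw1_set_nonempty S w μ γ h1) fun a ha => ?_
    have step2 : graphW1 S w μ ρ - a ≤ graphW1 S w γ ρ := by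
      refine le_csInf (gw1_set_nonempty S w γ ρ h2) fun b hb => ?_
      linarith [key a ha b hb]
    linarith
  linarith

end Aux

/-- The QW loss is a metric on the set of matrices all of whose columns lie in
`Range(S_{V_L})`, when the edge weights are strictly positive. -/
theorem QWLoss_metric {VL E C : Type*} [Fintype VL] [Fintype E] [Fintype C]
    (S : Matrix VL E ℝ) (w : E → ℝ) (hw : ∀ e, 0 < w e)
    (X Y Z : VL → C → ℝ)
    (hX : ∀ c, (fun v => X v c) ∈ Set.range S.mulVec)
    (hY : ∀ c, (fun v => Y v c) ∈ Set.range S.mulVec)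
    (hZ : ∀ c, (fun v => Z v c) ∈ Set.range S.mulVec) :
    0 ≤ QWLoss S w X Y ∧
    (QWLoss S w X Y = 0 ↔ X = Y) ∧
    QWLoss S w X Y = QWLoss S w Y X ∧
    QWLoss S w X Z ≤ QWLoss S w X Y + QWLoss S w Y Z := by
  have hrange : ∀ (A B : VL → C → ℝ), (∀ c, (fun v => A v c) ∈ Set.range S.mulVec) →
      (∀ c, (fun v => B v c) ∈ Set.range S.mulVec) →
      ∀ c, (fun v => B v c) - (fun v => A v c) ∈ Set.range S.mulVec := by
    intro A B hA hB c
    obtain ⟨f, hf⟩ := hA c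
    obtain ⟨g, hg⟩ := hB c
    exact ⟨g - f, by rw [Matrix.mulVec_sub, hf, hg]⟩
  refine ⟨?_, ⟨?_, ?_⟩, ?_, ?_⟩
  · exact Finset.sum_nonneg fun c _ => graphW1_nonneg S w hw _ _
  · intro h0
    have hz : ∀ c ∈ Finset.univ, graphW1 S w (fun v => X v c) (fun v => Y v c) = 0 :=
      (Finset.sum_eq_zero_iff_of_nonneg
        (fun c _ => graphW1_nonneg S w hw _ _)).mp h0
    funext v c
    have := (graphW1_eq_zero_iff S w hw _ _ (hrange X Y hX hY c)).mp (hz c (Finset.mem_univ c))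
    exact congrFun this v
  · rintro rfl
    exact Finset.sum_eq_zero fun c _ => graphW1_self S w hw _
  · exact Finset.sum_congr rfl fun c _ => graphW1_symm S w _ _
  · unfold QWLoss
    rw [← Finset.sum_add_distrib]
    exact Finset.sum_le_sum fun c _ => graphW1_triangle S w hw _ _ _
      (hrange X Y hX hY c) (hrange Y Z hY hZ c)
end
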